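/- arXiv:1503.04665 — 3 statements merged into one kernel-verified Lean document; each statement's English description precedes it below -/
import Mathlib

section
/- For every natural number n, the n-th Motzkin number satisfies M_n = Σ_{k ≥ 0} C(n, 2k) · C_k, where C_k is the k-th Catalan number. -/
open Finset

def motzkin : ℕ → ℕ
  | 0 => 1
  | n + 1 => motzkin n + ∑ i ∈ (Finset.range n).attach, motzkin i.1 * motzkin (n - 1 - i.1)
  termination_by n => n
  decreasing_by
  · exact Nat.lt_succ_self n
  · have := Finset.mem_range.mp i.2; omega
  · omega

/-- The candidate closed form. -/
def A (n : ℕ) : ℕ := ∑ k ∈ range (n + 1), n.choose (2 * k) * catalan k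

lemma vander (q : ℕ) : ∀ p m, ∑ i ∈ range (m + 1), i.choose p * (m - i).choose q
    = (m + 1).choose (p + q + 1) := by
  induction q with
  | zero =>
    intro p m
    induction m with
    | zero => cases p <;> simp [Nat.choose]
    | succ m ih =>
      rw [sum_range_succ]
      have h1 : ∀ i ∈ range (m + 1), i.choose p * (m + 1 - i).choose 0
          = i.choose p * (m - i).choose 0 := by intro i _; simp
      rw [sum_congr rfl h1, ih]
      have := Nat.choose_succ_succ (m + 1) (p + 0)
      simp only [Nat.sub_self, Nat.choose_zero_right, Nat.add_zero,
        Nat.succ_eq_add_one] at *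
      omega
  | succ q ihq =>
    intro p m
    induction m with
    | zero => simp [Nat.choose]
    | succ m ih =>
      rw [sum_range_succ]
      have h1 : ∀ i ∈ range (m + 1), i.choose p * (m + 1 - i).choose (q + 1)
          = i.choose p * (m - i).choose q + i.choose p * (m - i).choose (q + 1) := by
        intro i hi
        have hi' := mem_range.mp hi
        have h2 : m + 1 - i = (m - i) + 1 := by omega
        rw [h2, Nat.choose_succ_succ, Nat.mul_add]
      rw [sum_congr rfl h1, sum_add_distrib, ihq p m, ih]
      have h0 : (0 : ℕ).choose (q + 1) = 0 := by simp [Nat.choose]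
      rw [Nat.sub_self, h0, Nat.mul_zero, Nat.add_zero]
      rw [show p + (q + 1) + 1 = (p + q + 1) + 1 by ring,
        Nat.choose_succ_succ (m + 1) (p + q + 1)]

lemma vander' (n a b : ℕ) :
    ∑ i ∈ range n, i.choose (2 * a) * (n - 1 - i).choose (2 * b)
      = n.choose (2 * (a + b) + 1) := by
  cases n with
  | zero => simp
  | succ m =>
    have h : ∀ i, m + 1 - 1 - i = m - i := by intro i; omega
    simp only [h]
    rw [vander (2 * b) (2 * a) m]
    congr 1
    ring

lemma A_ext (i N : ℕ) (h : i < N) :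
    A i = ∑ a ∈ range N, i.choose (2 * a) * catalan a := by
  rw [A]
  refine sum_subset (range_subset_range.mpr h) fun a _ ha => ?_
  simp only [mem_range, not_lt] at ha
  rw [Nat.choose_eq_zero_of_lt (by omega), Nat.zero_mul]

lemma key (n : ℕ) : A (n + 1) = A n + ∑ i ∈ range n, A i * A (n - 1 - i) := by
  have hT : ∑ i ∈ range n, A i * A (n - 1 - i)
      = ∑ a ∈ range (n + 1), ∑ b ∈ range (n + 1),
          n.choose (2 * (a + b) + 1) * (catalan a * catalan b) := by
    have h1 : ∀ i ∈ range n, A i * A (n - 1 - i)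
        = ∑ a ∈ range (n + 1), ∑ b ∈ range (n + 1),
            (i.choose (2 * a) * catalan a) * ((n - 1 - i).choose (2 * b) * catalan b) := by
      intro i hi
      have hi' := mem_range.mp hi
      rw [A_ext i (n + 1) (by omega), A_ext (n - 1 - i) (n + 1) (by omega), sum_mul_sum]
    rw [sum_congr rfl h1, sum_comm]
    refine sum_congr rfl fun a _ => ?_
    rw [sum_comm]
    refine sum_congr rfl fun b _ => ?_
    rw [← vander' n a b, sum_mul]
    exact sum_congr rfl fun i _ => by ring
  have hD : ∑ k ∈ range (n + 1), n.choose (2 * k + 1) * catalan (k + 1)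
      = ∑ a ∈ range (n + 1), ∑ b ∈ range (n + 1),
          n.choose (2 * (a + b) + 1) * (catalan a * catalan b) := by
    have h1 : ∀ k ∈ range (n + 1), n.choose (2 * k + 1) * catalan (k + 1)
        = ∑ a ∈ range (k + 1),
            n.choose (2 * (a + (k - a)) + 1) * (catalan a * catalan (k - a)) := by
      intro k _
      rw [catalan_succ,
        Fin.sum_univ_eq_sum_range (fun i => catalan i * catalan (k - i)) (k + 1), mul_sum]
      refine sum_congr rfl fun a ha => ?_
      have := mem_range.mp ha
      rw [show a + (k - a) = k by omega]
    rw [sum_congr rfl h1,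
      sum_range_diag_flip (n + 1)
        (fun a b => n.choose (2 * (a + b) + 1) * (catalan a * catalan b))]
    refine sum_congr rfl fun m hm => ?_
    have hm' := mem_range.mp hm
    refine sum_subset (range_subset_range.mpr (by omega)) fun k hk hk' => ?_
    simp only [mem_range, not_lt] at hk'
    rw [Nat.choose_eq_zero_of_lt (by omega), Nat.zero_mul]
  have hA : A n = ∑ k ∈ range (n + 1), n.choose (2 * k + 2) * catalan (k + 1) + 1 := by
    have he : A n = ∑ k ∈ range (n + 2), n.choose (2 * k) * catalan k := by
      rw [A]
      refine sum_subset (range_subset_range.mpr (by omega)) fun a _ ha => ?_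
      simp only [mem_range, not_lt] at ha
      rw [Nat.choose_eq_zero_of_lt (by omega), Nat.zero_mul]
    rw [he, sum_range_succ']
    simp only [Nat.mul_zero, Nat.choose_zero_right, catalan_zero, Nat.mul_one]
    have h2 : ∀ k ∈ range (n + 1), n.choose (2 * (k + 1)) * catalan (k + 1)
        = n.choose (2 * k + 2) * catalan (k + 1) := by
      intro k _; rw [show 2 * (k + 1) = 2 * k + 2 by ring]
    rw [sum_congr rfl h2]
  have hL : A (n + 1)
      = ∑ k ∈ range (n + 1), n.choose (2 * k + 1) * catalan (k + 1)
        + ∑ k ∈ range (n + 1), n.choose (2 * k + 2) * catalan (k + 1) + 1 := by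
    rw [A, sum_range_succ']
    simp only [Nat.mul_zero, Nat.choose_zero_right, catalan_zero, Nat.mul_one]
    have h1 : ∀ k ∈ range (n + 1), (n + 1).choose (2 * (k + 1)) * catalan (k + 1)
        = n.choose (2 * k + 1) * catalan (k + 1) + n.choose (2 * k + 2) * catalan (k + 1) := by
      intro k _
      rw [show 2 * (k + 1) = (2 * k + 1) + 1 by ring, Nat.choose_succ_succ, Nat.add_mul]
    rw [sum_congr rfl h1, sum_add_distrib]
  omega
  -- hL, hA, hT, hD combine

theorem motzkin_eq_A : ∀ n, motzkin n = A n := by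
  intro n
  induction n using Nat.strong_induction_on with
  | _ n ih =>
    match n with
    | 0 => simp [motzkin, A]
    | n + 1 =>
      rw [motzkin, ih n (Nat.lt_succ_self n), key]
      congr 1
      rw [← sum_attach (range n) (fun i => A i * A (n - 1 - i))]
      refine sum_congr rfl fun i _ => ?_
      have hi := mem_range.mp i.2
      rw [ih i.1 (by omega), ih (n - 1 - i.1) (by omega)]

theorem motzkin_eq_sum_catalan (n : ℕ) :
    motzkin n = ∑ k ∈ Finset.range (n + 1), n.choose (2 * k) * catalan k := by
  rw [motzkin_eq_A, A]
end

section
/- For every natural number n, the number of words of length n over the alphabet {−1, 0, 1} whose total sum is 0 and all of whose partial sums are nonnegative equals the n-th Motzkin number M_n. -/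
/-!
First-return decomposition: a nonempty Motzkin word either starts with a step `0` followed by a
Motzkin word, or has the form `1 u (-1) v` with `u`, `v` Motzkin words, where the displayed `-1`
is the first return of the partial sums to `0`. That step is determined by the word, so the
decomposition is unique and the number of words of length `n + 1` is
`M n + ∑ i < n, M i * M (n - 1 - i)`.
-/

namespace List

theorem prefix_append_iff {α : Type*} {p u v : List α} :
    p <+: u ++ v ↔ p <+: u ∨ ∃ q, p = u ++ q ∧ q <+: v := by
  refine ⟨fun h => ?_, ?_⟩
  · induction u generalizing p with
    | nil => exact .inr ⟨p, rfl, h⟩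
    | cons a u ih =>
      obtain rfl | ⟨t, rfl, ht⟩ := prefix_cons_iff.mp h
      · exact .inl nil_prefix
      · simpa using ih ht
  · rintro (h | ⟨q, rfl, hq⟩)
    · exact h.trans (prefix_append u v)
    · exact (prefix_append_right_inj u).mpr hq

theorem forall_prefix_cons {α : Type*} {P : List α → Prop} {a : α} {t : List α} :
    (∀ p, p <+: a :: t → P p) ↔ P [] ∧ ∀ p, p <+: t → P (a :: p) := by
  simp only [prefix_cons_iff]
  exact ⟨fun h => ⟨h [] (.inl rfl), fun p hp => h _ (.inr ⟨p, rfl, hp⟩)⟩,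
    fun ⟨h0, h⟩ p => by rintro (rfl | ⟨q, rfl, hq⟩) <;> simp_all⟩

theorem finite_length_eq_of_forall_mem {α : Type*} {s : Set α} (hs : s.Finite) (n : ℕ) :
    {l : List α | l.length = n ∧ ∀ x ∈ l, x ∈ s}.Finite := by
  have := hs.to_subtype
  refine ((finite_length_eq s n).image (map Subtype.val)).subset ?_
  rintro l ⟨hl, hls⟩
  exact ⟨l.attachWith _ hls, by simpa using hl, attachWith_map_subtype_val hls⟩

theorem exists_eq_append_cons_of_prefix_sum_neg {M : Type*} [AddMonoid M] [LinearOrder M]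
    {t : List M} (h : ∃ p, p <+: t ∧ p.sum < 0) :
    ∃ u a v, t = u ++ a :: v ∧ (∀ p, p <+: u → 0 ≤ p.sum) ∧ u.sum + a < 0 := by
  induction t using reverseRecOn with
  | nil => obtain ⟨p, hp, hneg⟩ := h; simp_all
  | append_singleton s x ih =>
    by_cases hs : ∀ p, p <+: s → 0 ≤ p.sum
    · obtain ⟨p, hp, hneg⟩ := h
      obtain rfl | hp := prefix_concat_iff.mp hp
      · exact ⟨s, x, [], by simp, hs, by simpa using hneg⟩
      · exact absurd (hs p hp) (not_le.mpr hneg)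
    · push Not at hs
      obtain ⟨u, a, v, rfl, hu, hneg⟩ := ih hs
      exact ⟨u, a, v ++ [x], by simp, hu, hneg⟩

end List

def IsMotzkinWord (w : List ℤ) : Prop :=
  (∀ x ∈ w, x = 1 ∨ x = 0 ∨ x = -1) ∧ w.sum = 0 ∧ ∀ p, p <+: w → 0 ≤ p.sum

namespace IsMotzkinWord

theorem nil : IsMotzkinWord [] :=
  ⟨by simp, rfl, fun p hp => by simp [List.prefix_nil.mp hp]⟩

theorem zero_cons_iff {t : List ℤ} : IsMotzkinWord (0 :: t) ↔ IsMotzkinWord t := by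
  simp [IsMotzkinWord, List.forall_prefix_cons]

theorem one_cons_iff {t : List ℤ} :
    IsMotzkinWord (1 :: t) ↔ ∃ u v, t = u ++ (-1) :: v ∧ IsMotzkinWord u ∧ IsMotzkinWord v := by
  simp only [IsMotzkinWord, List.forall_prefix_cons, List.mem_cons, forall_eq_or_imp,
    List.sum_cons]
  constructor
  · rintro ⟨⟨-, hsteps⟩, hsum, -, hprefix⟩
    obtain ⟨u, a, v, rfl, hup, hneg⟩ :=
      List.exists_eq_append_cons_of_prefix_sum_neg ⟨t, List.prefix_rfl, by omega⟩
    obtain ⟨hu0, rfl⟩ : u.sum = 0 ∧ a = -1 := by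
      have := hup u List.prefix_rfl
      have := hsteps a (by simp)
      omega
    refine ⟨u, v, rfl, ⟨fun x hx => hsteps x (by simp [hx]), hu0, hup⟩,
      fun x hx => hsteps x (by simp [hx]), by simp [hu0] at hsum; omega, fun p hp => ?_⟩
    simpa [hu0] using hprefix (u ++ (-1) :: p) (by simpa using hp)
  · rintro ⟨u, v, rfl, ⟨hu, hu0, hup⟩, ⟨hv, hv0, hvp⟩⟩
    refine ⟨⟨by simp, ?_⟩, by simp [hu0, hv0], by simp, fun p hp => ?_⟩
    · simp only [List.mem_append, List.mem_cons]
      rintro x (hx | rfl | hx)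
      exacts [hu x hx, by simp, hv x hx]
    rcases List.prefix_append_iff.mp hp with hp | ⟨q, rfl, hq⟩
    · linarith [hup p hp]
    · obtain rfl | ⟨r, rfl, hr⟩ := List.prefix_cons_iff.mp hq
      · simp [hu0]
      · simpa [hu0] using hvp r hr

theorem cons_iff {a : ℤ} {t : List ℤ} :
    IsMotzkinWord (a :: t) ↔ (a = 0 ∧ IsMotzkinWord t) ∨
      (a = 1 ∧ ∃ u v, t = u ++ (-1) :: v ∧ IsMotzkinWord u ∧ IsMotzkinWord v) := by
  constructor
  · intro h
    obtain rfl | rfl | rfl := h.1 a List.mem_cons_self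
    · exact .inr ⟨rfl, one_cons_iff.mp h⟩
    · exact .inl ⟨rfl, zero_cons_iff.mp h⟩
    · exact absurd (h.2.2 [-1] (by simp)) (by simp)
  · rintro (⟨rfl, h⟩ | ⟨rfl, h⟩)
    exacts [zero_cons_iff.mpr h, one_cons_iff.mpr h]

theorem length_le_of_append_neg_one_cons_eq {u u' v v' : List ℤ} (hu : IsMotzkinWord u)
    (hu' : IsMotzkinWord u') (h : u ++ (-1) :: v = u' ++ (-1) :: v') :
    u.length ≤ u'.length := by
  by_contra! hlt
  have hprefix : u' ++ [-1] <+: u := by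
    rw [← List.isPrefix_append_of_length (l₃ := (-1) :: v) (by simpa using hlt), h]
    simp
  simpa [hu'.2.1] using hu.2.2 _ hprefix

theorem append_neg_one_cons_inj {u u' v v' : List ℤ} (hu : IsMotzkinWord u)
    (hu' : IsMotzkinWord u') (h : u ++ (-1) :: v = u' ++ (-1) :: v') : u = u' ∧ v = v' := by
  have hlen := (length_le_of_append_neg_one_cons_eq hu hu' h).antisymm
    (length_le_of_append_neg_one_cons_eq hu' hu h.symm)
  obtain ⟨rfl, hv⟩ := List.append_inj h hlen
  exact ⟨rfl, List.cons_injective hv⟩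

end IsMotzkinWord

theorem finite_setOf_isMotzkinWord (n : ℕ) :
    {w : List ℤ | w.length = n ∧ IsMotzkinWord w}.Finite :=
  (List.finite_length_eq_of_forall_mem (Set.toFinite {1, 0, -1}) n).subset
    fun _ hw => ⟨hw.1, hw.2.1⟩

noncomputable def motzkinWords (n : ℕ) : Finset (List ℤ) :=
  (finite_setOf_isMotzkinWord n).toFinset

theorem mem_motzkinWords {n : ℕ} {w : List ℤ} :
    w ∈ motzkinWords n ↔ w.length = n ∧ IsMotzkinWord w :=
  (finite_setOf_isMotzkinWord n).mem_toFinset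

theorem motzkinWords_zero : motzkinWords 0 = {[]} := by
  ext w
  rw [mem_motzkinWords, List.length_eq_zero_iff, Finset.mem_singleton]
  exact ⟨And.left, fun h => ⟨h, h ▸ IsMotzkinWord.nil⟩⟩

theorem motzkinWords_succ (n : ℕ) :
    motzkinWords (n + 1) =
      (motzkinWords n).map ⟨(0 :: ·), List.cons_injective⟩ ∪
      ((Finset.range n).sigma fun i => motzkinWords i ×ˢ motzkinWords (n - 1 - i)).image
        fun x => 1 :: (x.2.1 ++ (-1) :: x.2.2) := by
  ext (_ | ⟨a, t⟩)
  · simp [mem_motzkinWords]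
  simp only [mem_motzkinWords, List.length_cons, Nat.add_right_cancel_iff,
    IsMotzkinWord.cons_iff, Finset.mem_union, Finset.mem_map, Function.Embedding.coeFn_mk,
    List.cons.injEq, exists_eq_right_right, Finset.mem_image, Finset.mem_sigma, Finset.mem_range,
    Finset.mem_product, Sigma.exists, Prod.exists, existsAndEq, true_and]
  constructor
  · rintro ⟨hlen, ⟨rfl, ht⟩ | ⟨rfl, u, v, rfl, hu, hv⟩⟩
    · exact .inl ⟨⟨hlen, ht⟩, rfl⟩
    · simp only [List.length_append, List.length_cons] at hlen
      exact .inr ⟨u, v, ⟨by omega, hu, by omega, hv⟩, rfl, rfl⟩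
  · rintro (⟨⟨hlen, ht⟩, rfl⟩ | ⟨u, v, ⟨hlt, hu, hvlen, hv⟩, rfl, rfl⟩)
    · exact ⟨hlen, .inl ⟨rfl, ht⟩⟩
    · exact ⟨by simp; omega, .inr ⟨rfl, u, v, rfl, hu, hv⟩⟩

theorem card_motzkinWords_succ (n : ℕ) :
    (motzkinWords (n + 1)).card = (motzkinWords n).card +
      ∑ i ∈ Finset.range n, (motzkinWords i).card * (motzkinWords (n - 1 - i)).card := by
  rw [motzkinWords_succ, Finset.card_union_of_disjoint, Finset.card_map,
    Finset.card_image_of_injOn, Finset.card_sigma]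
  · simp only [Finset.card_product]
  · rintro ⟨i, u, v⟩ hx ⟨i', u', v'⟩ hx' h
    simp only [Finset.coe_sigma, Set.mem_sigma_iff, Finset.mem_coe, Finset.mem_product,
      mem_motzkinWords] at hx hx'
    obtain ⟨rfl, rfl⟩ := IsMotzkinWord.append_neg_one_cons_inj hx.2.1.2 hx'.2.1.2
      (List.cons_injective h)
    obtain rfl : i = i' := hx.2.1.1.symm.trans hx'.2.1.1
    rfl
  · simp [Finset.disjoint_left]

theorem motzkin_succ (n : ℕ) :
    motzkin (n + 1) = motzkin n + ∑ i ∈ Finset.range n, motzkin i * motzkin (n - 1 - i) := by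
  rw [motzkin, Finset.sum_attach (Finset.range n) fun i => motzkin i * motzkin (n - 1 - i)]

theorem card_motzkinWords (n : ℕ) : (motzkinWords n).card = motzkin n := by
  induction n using Nat.strong_induction_on with
  | _ n ih =>
    cases n with
    | zero => rw [motzkinWords_zero, Finset.card_singleton, motzkin]
    | succ n =>
      rw [card_motzkinWords_succ, motzkin_succ, ih n n.lt_succ_self]
      congr 1
      refine Finset.sum_congr rfl fun i hi => ?_
      rw [Finset.mem_range] at hi
      rw [ih i (by omega), ih (n - 1 - i) (by omega)]

theorem motzkin_words_card (n : ℕ) :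
    {w : List ℤ | w.length = n ∧ (∀ x ∈ w, x = 1 ∨ x = 0 ∨ x = -1) ∧ w.sum = 0 ∧
      ∀ p, p <+: w → 0 ≤ p.sum}.ncard = motzkin n :=
  (Set.ncard_eq_toFinset_card _ (finite_setOf_isMotzkinWord n)).trans (card_motzkinWords n)
end

section
/- For every natural number n, the (n+1)-st Catalan number satisfies the first-order recurrence (n+3)·C_{n+2} = 2(2n+3)·C_{n+1}, and consequently Touchard's sum S(n) = Σ_{k} C(n,2k)·2^(n−2k)·C_k satisfies the same recurrence (n+3)·S(n+1) = 2(2n+3)·S(n), which together with S(0) = 1 = C_1 proves S(n) = C_{n+1}. -/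
private def Gfun (n : ℕ) : ℕ → ℕ
  | 0 => 0
  | (j+1) => n.choose (2*j+1) * (2*j+2).choose (j+1) * 2^(n - 2*j)

private lemma catrec (n : ℕ) : (n + 3) * catalan (n + 2) = 2 * (2 * n + 3) * catalan (n + 1) := by
  have a := Nat.succ_mul_centralBinom_succ (n+1)
  have b1 := succ_mul_catalan_eq_centralBinom (n+1)
  have b2 := succ_mul_catalan_eq_centralBinom (n+2)
  have key : (n+2) * ((n + 3) * catalan (n + 2)) = (n+2) * (2 * (2 * n + 3) * catalan (n + 1)) := by
    calc (n+2) * ((n + 3) * catalan (n + 2)) = (n+2) * ((n+2+1) * catalan (n+2)) := by ring_nf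
    _ = (n+2) * (n+2).centralBinom := by rw [b2]
    _ = (n+1+1) * Nat.centralBinom (n+1+1) := by ring_nf
    _ = 2 * (2*(n+1)+1) * Nat.centralBinom (n+1) := a
    _ = 2 * (2*n+3) * ((n+1+1) * catalan (n+1)) := by rw [b1]; ring
    _ = (n+2) * (2 * (2 * n + 3) * catalan (n + 1)) := by ring
  exact Nat.eq_of_mul_eq_mul_left (by omega) key

private lemma keystep (n k : ℕ) :
    (n + 3) * ((n + 1).choose (2 * k) * 2 ^ (n + 1 - 2 * k) * catalan k) + Gfun n (k + 1) =
    2 * (2 * n + 3) * (n.choose (2 * k) * 2 ^ (n - 2 * k) * catalan k) + Gfun n k := by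
  rcases lt_trichotomy (2 * k) (n + 1) with h | h | h
  · -- 2k ≤ n
    rcases k with _ | j
    · -- k = 0
      simp only [Gfun, Nat.mul_zero, Nat.choose_zero_right, catalan_zero, Nat.zero_sub]
      norm_num [Nat.choose_one_right, pow_succ]
      ring
    · -- k = j + 1
      obtain ⟨m, rfl⟩ : ∃ m, n = 2 * j + 2 + m := ⟨n - (2 * j + 2), by omega⟩
      simp only [Gfun]
      rw [show 2 * (j + 1) = 2 * j + 2 by ring, show 2 * j + 2 + 1 = 2 * j + 3 by ring,
        show 2 * j + 2 + 2 = 2 * j + 4 by ring, show j + 1 + 1 = j + 2 by ring,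
        show 2 * j + 2 + m + 1 - (2 * j + 2) = m + 1 by omega,
        show 2 * j + 2 + m - (2 * j + 2) = m by omega,
        show 2 * j + 2 + m - 2 * j = m + 2 by omega]
      have h1 : (2*j+2+m).choose (2*j+3) * (2*j+3) = (2*j+2+m).choose (2*j+2) * m := by
        have := Nat.choose_succ_right_eq (2*j+2+m) (2*j+2)
        rwa [show 2*j+2+1 = 2*j+3 by ring, show 2*j+2+m - (2*j+2) = m by omega] at this
      have h2 : (j+2) * ((2*j+4).choose (j+2)) = 2*(2*j+3) * ((2*j+2).choose (j+1)) := by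
        have := Nat.succ_mul_centralBinom_succ (j+1)
        unfold Nat.centralBinom at this
        rwa [show 2*(j+1+1) = 2*j+4 by ring, show j+1+1 = j+2 by ring,
          show 2*(j+1)+1 = 2*j+3 by ring, show 2*(j+1) = 2*j+2 by ring] at this
      have h3 : (2*j+2+m).choose (2*j+2) * (2*j+2+m+1) =
          (2*j+2+m+1).choose (2*j+2) * (m+1) := by
        have := Nat.choose_mul_succ_eq (2*j+2+m) (2*j+2)
        rwa [show 2*j+2+m+1 - (2*j+2) = m+1 by omega] at this
      have h4 : (2*j+2+m).choose (2*j+2) * (2*j+2) = (2*j+2+m).choose (2*j+1) * (m+1) := by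
        have := Nat.choose_succ_right_eq (2*j+2+m) (2*j+1)
        rwa [show 2*j+1+1 = 2*j+2 by ring, show 2*j+2+m - (2*j+1) = m+1 by omega] at this
      have h5 : (j+2) * catalan (j+1) = (2*j+2).choose (j+1) := by
        have := succ_mul_catalan_eq_centralBinom (j+1)
        unfold Nat.centralBinom at this
        rwa [show j+1+1 = j+2 by ring, show 2*(j+1) = 2*j+2 by ring] at this
      apply Nat.eq_of_mul_eq_mul_left (show 0 < (2*j+3)*(j+2)*(m+1) by positivity)
      zify at h1 h2 h3 h4 h5 ⊢
      rw [show ((2:ℤ))^(m+1) = 2*2^m by rw [pow_succ]; ring,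
        show ((2:ℤ))^(m+2) = 4*2^m by rw [pow_add]; ring]
      linear_combination
        (-2*(2:ℤ)^m*(catalan (j+1) : ℤ)*((2*j+2+m : ℤ)+3)*(2*(j:ℤ)+3)*((j:ℤ)+2)) * h3 +
        ((2:ℤ)^m*((m:ℤ)+1)*(((2*j+4).choose (j+2) : ℤ))*((j:ℤ)+2)) * h1 +
        ((2:ℤ)^m*((m:ℤ)+1)*(((2*j+2+m).choose (2*j+2) : ℤ))*(m:ℤ)) * h2 +
        (8*(2:ℤ)^m*((j:ℤ)+1)*(((2*j+2+m).choose (2*j+2) : ℤ))*(2*(j:ℤ)+3)*((j:ℤ)+2)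
          - 2*(2:ℤ)^m*((m:ℤ)+1)*(((2*j+2+m).choose (2*j+2) : ℤ))*(m:ℤ)*(2*(j:ℤ)+3)) * h5 +
        (4*(2:ℤ)^m*(2*(j:ℤ)+3)*((j:ℤ)+2)*(((2*j+2).choose (j+1) : ℤ))) * h4
  · -- 2k = n + 1
    obtain ⟨j, rfl⟩ : ∃ j, k = j + 1 := ⟨k - 1, by omega⟩
    have hn : n = 2*j+1 := by omega
    subst hn
    have z1 : (2 * j + 1).choose (2 * (j + 1)) = 0 := Nat.choose_eq_zero_of_lt (by omega)
    have z2 : (2 * j + 1).choose (2 * (j + 1) + 1) = 0 := Nat.choose_eq_zero_of_lt (by omega)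
    simp only [Gfun, z1, z2, Nat.zero_mul, Nat.mul_zero, Nat.add_zero, Nat.zero_add]
    rw [show 2*j+1+1 - 2*(j+1) = 0 by omega, show 2*j+1-2*j = 1 by omega,
      show 2*j+1+1 = 2*(j+1) by ring, Nat.choose_self, Nat.choose_self]
    have h5 : (j+2) * catalan (j+1) = (2*j+2).choose (j+1) := by
      have := succ_mul_catalan_eq_centralBinom (j+1)
      unfold Nat.centralBinom at this
      rwa [show j+1+1 = j+2 by ring, show 2*(j+1) = 2*j+2 by ring] at this
    rw [show 2*(j+1) = 2*j+2 by ring, ← h5]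
    ring
  · -- 2k > n + 1
    obtain ⟨j, rfl⟩ : ∃ j, k = j + 1 := ⟨k - 1, by omega⟩
    have z1 : (n+1).choose (2*(j+1)) = 0 := Nat.choose_eq_zero_of_lt (by omega)
    have z2 : n.choose (2*(j+1)) = 0 := Nat.choose_eq_zero_of_lt (by omega)
    have z3 : n.choose (2*(j+1)+1) = 0 := Nat.choose_eq_zero_of_lt (by omega)
    have z4 : n.choose (2*j+1) = 0 := Nat.choose_eq_zero_of_lt (by omega)
    simp [Gfun, z1, z2, z3, z4]

private lemma touchrec (n : ℕ) :
    (n + 3) * (∑ k ∈ Finset.range (n + 2),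
        (n + 1).choose (2 * k) * 2 ^ (n + 1 - 2 * k) * catalan k) =
      2 * (2 * n + 3) * (∑ k ∈ Finset.range (n + 1),
        n.choose (2 * k) * 2 ^ (n - 2 * k) * catalan k) := by
  have hsum : ∑ k ∈ Finset.range (n + 2),
      ((n + 3) * ((n + 1).choose (2 * k) * 2 ^ (n + 1 - 2 * k) * catalan k) + Gfun n (k + 1)) =
      ∑ k ∈ Finset.range (n + 2),
      (2 * (2 * n + 3) * (n.choose (2 * k) * 2 ^ (n - 2 * k) * catalan k) + Gfun n k) :=
    Finset.sum_congr rfl fun k _ => keystep n k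
  rw [Finset.sum_add_distrib, Finset.sum_add_distrib, ← Finset.mul_sum, ← Finset.mul_sum] at hsum
  have hG : ∑ k ∈ Finset.range (n + 2), Gfun n (k + 1) =
      ∑ k ∈ Finset.range (n + 2), Gfun n k := by
    have h1 := Finset.sum_range_succ' (Gfun n) (n + 2)
    have h2 := Finset.sum_range_succ (Gfun n) (n + 2)
    have hz0 : Gfun n 0 = 0 := rfl
    have hzt : Gfun n (n + 2) = 0 := by
      show n.choose (2*(n+1)+1) * _ * _ = 0
      rw [Nat.choose_eq_zero_of_lt (by omega)]; ring
    omega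
  have hlast : ∑ k ∈ Finset.range (n + 2), n.choose (2 * k) * 2 ^ (n - 2 * k) * catalan k =
      ∑ k ∈ Finset.range (n + 1), n.choose (2 * k) * 2 ^ (n - 2 * k) * catalan k := by
    rw [Finset.sum_range_succ, Nat.choose_eq_zero_of_lt (by omega)]
    ring
  rw [hG, hlast] at hsum
  omega

theorem catalan_recurrence_and_touchard :
    (∀ n : ℕ, (n + 3) * catalan (n + 2) = 2 * (2 * n + 3) * catalan (n + 1)) ∧
    (∀ n : ℕ, (n + 3) * (∑ k ∈ Finset.range (n + 2),
        (n + 1).choose (2 * k) * 2 ^ (n + 1 - 2 * k) * catalan k) =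
      2 * (2 * n + 3) * (∑ k ∈ Finset.range (n + 1),
        n.choose (2 * k) * 2 ^ (n - 2 * k) * catalan k)) ∧
    (∑ k ∈ Finset.range 1, (0 : ℕ).choose (2 * k) * 2 ^ (0 - 2 * k) * catalan k) = 1 ∧
    (∀ n : ℕ, (∑ k ∈ Finset.range (n + 1),
        n.choose (2 * k) * 2 ^ (n - 2 * k) * catalan k) = catalan (n + 1)) := by
  refine ⟨catrec, touchrec, by simp, ?_⟩
  intro n
  induction n with
  | zero => simp [catalan_one]
  | succ n ih =>
    have h1 := touchrec n
    rw [ih, ← catrec n] at h1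
    exact Nat.eq_of_mul_eq_mul_left (by omega) h1
end
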